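/- Let A and B be max-plus automata over the same finite alphabet Σ with A deterministic and f_B(v) ∈ ℕ for all words v. If some word w with f_A(w) ≠ −∞ admits a factorisation tree of height at most 3|S̄_{A,B}| containing a fault, then I_{A,B} contains a tractable witness of non-domination. -/

import Mathlib

open scoped Classical

/-! ### Max-plus automata -/

/-- A max-plus automaton over alphabet `Sigma` with states `Q`:
a transition matrix for each letter, an initial row vector and a final column vector,
all with entries in `ℕmax = ℕ ∪ {-∞}`, represented as `WithBot ℕ`. -/
structure MPA (Sigma : Type) (Q : Type) where
  M : Sigma → Q → Q → WithBot ℕ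
  I : Q → WithBot ℕ
  F : Q → WithBot ℕ

namespace MPA

variable {Sigma Q : Type}

/-- The matrix of a word, i.e. the product `M(w₁) ⊗ ⋯ ⊗ M(w_k)` over the
max-plus semiring. -/
def mword [Fintype Q] [DecidableEq Q] (A : MPA Sigma Q) : List Sigma → Q → Q → WithBot ℕ
  | [] => fun p q => if p = q then ((0 : ℕ) : WithBot ℕ) else ⊥
  | a :: w => fun p q => Finset.univ.sup fun r => A.M a p r + A.mword w r q

/-- The weighting function computed by a max-plus automaton:
`f_A(w) = I ⊗ M(w) ⊗ F`. -/
def func [Fintype Q] [DecidableEq Q] (A : MPA Sigma Q) (w : List Sigma) : WithBot ℕ :=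
  Finset.univ.sup fun p => Finset.univ.sup fun q => A.I p + A.mword w p q + A.F q

/-- `A` is deterministic: at most one non-`-∞` entry in `I`,
and at most one non-`-∞` entry in each row of each `M(a)`. -/
def Deterministic (A : MPA Sigma Q) : Prop :=
  (∀ p q, A.I p ≠ ⊥ → A.I q ≠ ⊥ → p = q) ∧
    ∀ a p q r, A.M a p q ≠ ⊥ → A.M a p r ≠ ⊥ → q = r

end MPA

/-- `A` is big-O of `B`: there is `c ≥ 1` with `f_A(w) ≤ c·f_B(w) + c` for all `w`. -/
def BigO {Sigma Q1 Q2 : Type} [Fintype Q1] [DecidableEq Q1] [Fintype Q2] [DecidableEq Q2]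
    (A : MPA Sigma Q1) (B : MPA Sigma Q2) : Prop :=
  ∃ c : ℕ, 1 ≤ c ∧ ∀ w : List Sigma, A.func w ≤ c • B.func w + (c : WithBot ℕ)

/-! ### The semiring Ω = {-∞, 0, 1, ∞} -/

/-- The four-element semiring `Ω = ({-∞,0,1,∞}, max, +)`. -/
inductive OSR : Type
  | bot | zero | one | inf
  deriving DecidableEq

namespace OSR

def rank : OSR → ℕ
  | bot => 0 | zero => 1 | one => 2 | inf => 3

instance : LE OSR := ⟨fun a b => a.rank ≤ b.rank⟩
instance : LT OSR := ⟨fun a b => a.rank < b.rank⟩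

/-- The max operation of `Ω`, given by the order `-∞ < 0 < 1 < ∞`. -/
def sup (a b : OSR) : OSR := if a.rank ≤ b.rank then b else a

/-- The sum operation of `Ω`. -/
def add : OSR → OSR → OSR
  | bot, _ => bot
  | _, bot => bot
  | zero, x => x
  | x, zero => x
  | one, one => one
  | one, inf => inf
  | inf, one => inf
  | inf, inf => inf

/-- Stabilisation on `Ω`. -/
def sharp : OSR → OSR
  | bot => bot | zero => zero | one => inf | inf => inf

/-- Projection into `Ω̄ = {-∞,0,1}`. -/
def bar : OSR → OSR
  | bot => bot | zero => zero | one => one | inf => one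

end OSR

/-- Max of a finite family in `Ω`. -/
def osum {n : ℕ} (f : Fin n → OSR) : OSR :=
  (List.finRange n).foldr (fun j acc => OSR.sup (f j) acc) OSR.bot

/-- Product of matrices over `Ω`. -/
def omul {n : ℕ} (M N : Fin n → Fin n → OSR) : Fin n → Fin n → OSR :=
  fun i k => osum fun j => OSR.add (M i j) (N j k)

/-- Entrywise projection of a matrix into `Ω̄`. -/
def obar {n : ℕ} (M : Fin n → Fin n → OSR) : Fin n → Fin n → OSR :=
  fun i j => (M i j).bar

/-- Projection of `ℕmax` into `Ω̄ ⊆ Ω`: `-∞ ↦ -∞`, `0 ↦ 0`, positive ↦ `1`. -/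
def barW (x : WithBot ℕ) : OSR :=
  WithBot.recBotCoe OSR.bot (fun n => if n = 0 then OSR.zero else OSR.one) x

/-- Projection of `ℕ` into `Ω̄`. -/
def barNat (n : ℕ) : OSR := if n = 0 then OSR.zero else OSR.one

/-! ### The semigroups `I_{Q,i}` and their operations -/

/-- A (non-`⊥`) element `(p, x, q, M)` of the semigroup `I_{Q,n}`. -/
structure Elem (QA : Type) (n : ℕ) where
  p : QA
  x : OSR
  q : QA
  M : Fin n → Fin n → OSR

/-- Product of two elements (assuming endpoint compatibility). -/
def eprod {QA : Type} {n : ℕ} (e f : Elem QA n) : Elem QA n :=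
  ⟨e.p, e.x.add f.x, f.q, omul e.M f.M⟩

/-- The product in `I_{Q,n}` with `⊥` (`none` is `⊥`). -/
def omulO {QA : Type} {n : ℕ} [DecidableEq QA] :
    Option (Elem QA n) → Option (Elem QA n) → Option (Elem QA n)
  | some e, some f => if e.q = f.p then some (eprod e f) else none
  | _, _ => none

/-- `(p,x,q,M)` is path-idempotent: `p = q` and `bar(M)` is idempotent. -/
def pathIdem {QA : Type} {n : ℕ} (e : Elem QA n) : Prop :=
  e.p = e.q ∧ omul (obar e.M) (obar e.M) = obar e.M

/-- `M` with all diagonal entries replaced by their stabilisation. -/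
def mdiagSharp {n : ℕ} (M : Fin n → Fin n → OSR) : Fin n → Fin n → OSR :=
  fun i j => if i = j then (M i j).sharp else M i j

/-- Stabilisation of a (path-idempotent) matrix: `M^# = M ⊗ M' ⊗ M`. -/
def mstab {n : ℕ} (M : Fin n → Fin n → OSR) : Fin n → Fin n → OSR :=
  omul (omul M (mdiagSharp M)) M

/-- Stabilisation of a (path-idempotent) element. -/
def estab {QA : Type} {n : ℕ} (e : Elem QA n) : Elem QA n :=
  ⟨e.p, e.x.sharp, e.p, mstab e.M⟩

/-- `⟨N⟩`: all off-diagonal entries replaced by their bar. -/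
def mangle {n : ℕ} (M : Fin n → Fin n → OSR) : Fin n → Fin n → OSR :=
  fun i j => if i = j then M i j else (M i j).bar

/-- Flattening of a (path-idempotent) matrix: `M^♭ = bar(M) ⊗ ⟨M³⟩ ⊗ bar(M)`. -/
def mflat {n : ℕ} (M : Fin n → Fin n → OSR) : Fin n → Fin n → OSR :=
  omul (obar M) (omul (mangle (omul M (omul M M))) (obar M))

/-- Flattening of a (path-idempotent) element. -/
def eflat {QA : Type} {n : ℕ} (e : Elem QA n) : Elem QA n :=
  ⟨e.p, e.x, e.p, mflat e.M⟩

/-- Componentwise projection of an element to `Ω̄`. -/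
def ebar {QA : Type} {n : ℕ} (e : Elem QA n) : Elem QA n :=
  ⟨e.p, e.x.bar, e.q, obar e.M⟩

/-! ### Semigroup of paths and of asymptotic behaviours -/

/-- Generators: `(p, bar x, q, bar (M_B(a)))` for each transition `p →^{a:x} q` of `A`
with `x ≠ -∞`. -/
def IsGen {Sigma QA : Type} {nB : ℕ} (A : MPA Sigma QA) (B : MPA Sigma (Fin nB))
    (e : Elem QA nB) : Prop :=
  ∃ (a : Sigma) (p q : QA) (x : ℕ), A.M a p q = ((x : ℕ) : WithBot ℕ) ∧
    e = ⟨p, barNat x, q, fun i j => barW (B.M a i j)⟩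

/-- The semigroup of paths `S̄_{A,B}` (as a subset of `Ī_{Q_A,|Q_B|}`, including `⊥`):
generated by the generators under the product. -/
inductive InPathsO {Sigma QA : Type} {nB : ℕ} [DecidableEq QA]
    (A : MPA Sigma QA) (B : MPA Sigma (Fin nB)) : Option (Elem QA nB) → Prop
  | gen : ∀ e, IsGen A B e → InPathsO A B (some e)
  | mul : ∀ x y, InPathsO A B x → InPathsO A B y → InPathsO A B (omulO x y)

/-- The semigroup of asymptotic behaviours `I_{A,B}`: generated by the generators and
closed under product, stabilisation and flattening. -/
inductive InAsympO {Sigma QA : Type} {nB : ℕ} [DecidableEq QA]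
    (A : MPA Sigma QA) (B : MPA Sigma (Fin nB)) : Option (Elem QA nB) → Prop
  | gen : ∀ e, IsGen A B e → InAsympO A B (some e)
  | mul : ∀ x y, InAsympO A B x → InAsympO A B y → InAsympO A B (omulO x y)
  | stab : ∀ e, InAsympO A B (some e) → pathIdem e → InAsympO A B (some (estab e))
  | flat : ∀ e, InAsympO A B (some e) → pathIdem e → InAsympO A B (some (eflat e))

/-- The cardinality `|S̄_{A,B}|` of the semigroup of paths. -/
noncomputable def sizeS {Sigma QA : Type} {nB : ℕ} [DecidableEq QA]
    (A : MPA Sigma QA) (B : MPA Sigma (Fin nB)) : ℕ :=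
  Set.ncard {x : Option (Elem QA nB) | InPathsO A B x}

/-- `(p,x,q,M)` is a witness of non-domination: `p` initial in `A`, `q` final in `A`,
`x = ∞` and `bar(I_B) ⊗ M ⊗ bar(F_B) < ∞`. -/
def IsWitness {Sigma QA : Type} {nB : ℕ} (A : MPA Sigma QA) (B : MPA Sigma (Fin nB))
    (e : Elem QA nB) : Prop :=
  A.I e.p ≠ ⊥ ∧ A.F e.q ≠ ⊥ ∧ e.x = OSR.inf ∧
    osum (fun i => osum fun j =>
      OSR.add (barW (B.I i)) (OSR.add (e.M i j) (barW (B.F j)))) ≠ OSR.inf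

/-! ### Tractable witnesses -/

/-- Membership of an extended element (`none` is the adjoined identity `𝟙`) in `S̄_{A,B}`. -/
def InPathsOpt {Sigma QA : Type} {nB : ℕ} [DecidableEq QA]
    (A : MPA Sigma QA) (B : MPA Sigma (Fin nB)) : Option (Elem QA nB) → Prop
  | none => True
  | some e => InPathsO A B (some e)

/-- `g ⊗ e ⊗ g'` where `g, g'` may be the adjoined identity `𝟙` (i.e. `none`). -/
def extWrap {QA : Type} {n : ℕ} (g : Option (Elem QA n)) (e : Elem QA n)
    (g' : Option (Elem QA n)) : Elem QA n :=
  match g, g' with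
  | none, none => e
  | some a, none => eprod a e
  | none, some b => eprod e b
  | some a, some b => eprod a (eprod e b)

/-- `TractCore A B k e`: `e` has the form
`(g_1 (⋯ (g_{k-1} (g_k)^# g'_{k-1})^♭ ⋯)^♭ g'_1)^♭` with `k` flattenings, built from
elements of `S̄_{A,B} ∪ {𝟙}`. -/
inductive TractCore {Sigma QA : Type} {nB : ℕ} [DecidableEq QA]
    (A : MPA Sigma QA) (B : MPA Sigma (Fin nB)) : ℕ → Elem QA nB → Prop
  | base : ∀ e, InPathsO A B (some e) → pathIdem e → TractCore A B 0 (estab e)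
  | step : ∀ k e g g', TractCore A B k e →
      InPathsOpt A B g → InPathsOpt A B g' →
      (∀ a, g = some a → a.q = e.p) → (∀ b, g' = some b → e.q = b.p) →
      pathIdem (extWrap g e g') →
      TractCore A B (k + 1) (eflat (extWrap g e g'))

/-- A tractable witness of non-domination. -/
def IsTractableWitness {Sigma QA : Type} {nB : ℕ} [DecidableEq QA]
    (A : MPA Sigma QA) (B : MPA Sigma (Fin nB)) (wit : Elem QA nB) : Prop :=
  IsWitness A B wit ∧
    ∃ (m : ℕ) (e : Elem QA nB) (g g' : Option (Elem QA nB)),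
      m + 1 ≤ 3 * sizeS A B ∧
      TractCore A B m e ∧ InPathsOpt A B g ∧ InPathsOpt A B g' ∧
      (∀ a, g = some a → a.q = e.p) ∧ (∀ b, g' = some b → e.q = b.p) ∧
      wit = extWrap g e g'

/-! ### Factorisation trees -/

/-- Finite ordered trees labelled by elements of `Ī_{Q_A,|Q_B|}`. -/
inductive FT (QA : Type) (n : ℕ) : Type
  | leaf : Elem QA n → FT QA n
  | node : Elem QA n → List (FT QA n) → FT QA n

namespace FT

variable {QA : Type} {n : ℕ}

/-- The label of the root of a tree. -/
def label : FT QA n → Elem QA n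
  | leaf e => e
  | node e _ => e

mutual
  /-- The list of leaf labels of a tree, in order. -/
  def leaves : FT QA n → List (Elem QA n)
    | .leaf e => [e]
    | .node _ cs => leavesList cs
  def leavesList : List (FT QA n) → List (Elem QA n)
    | [] => []
    | t :: ts => leaves t ++ leavesList ts
end

mutual
  /-- Height of a tree: leaves have height `0`. -/
  def height : FT QA n → ℕ
    | .leaf _ => 0
    | .node _ cs => heightList cs + 1
  def heightList : List (FT QA n) → ℕ
    | [] => 0
    | t :: ts => max (height t) (heightList ts)
end

/-- The `i`-th child. -/
def childAt : FT QA n → ℕ → Option (FT QA n)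
  | leaf _, _ => none
  | node _ cs, i => cs[i]?

/-- The subtree at a path (a list of child indices from the root). -/
def subtreeAt : FT QA n → List ℕ → Option (FT QA n)
  | t, [] => some t
  | t, i :: rest => (t.childAt i).bind fun c => subtreeAt c rest

/-- Well-formed factorisation trees: internal nodes have ≥ 2 children, are labelled by the
product of the children's labels (with compatible endpoints), and nodes with ≥ 3 children
are idempotent nodes: all children and the node itself carry one same idempotent label. -/
inductive WF : FT QA n → Prop
  | leaf : ∀ e, WF (FT.leaf e)
  | node : ∀ (lbl : Elem QA n) (cs : List (FT QA n)),
      2 ≤ cs.length →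
      (∀ c ∈ cs, WF c) →
      List.Chain' (fun a b => a.q = b.p) (cs.map FT.label) →
      (∀ h t, cs.map FT.label = h :: t → lbl = t.foldl eprod h) →
      (3 ≤ cs.length → lbl.p = lbl.q ∧ eprod lbl lbl = lbl ∧ ∀ c ∈ cs, FT.label c = lbl) →
      WF (FT.node lbl cs)

end FT

/-- One top-down step of the computation of contributors: from the contributor set `C` of a
node with children `cs`, the contributor set of the `i`-th child. -/
def contribStep {QA : Type} {n : ℕ} (cs : List (FT QA n)) (C : Set (Fin n × Fin n)) (i : ℕ) :
    Set (Fin n × Fin n) :=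
  match cs with
  | [c1, c2] =>
      let M := (FT.label c1).M
      let P := (FT.label c2).M
      if i = 0 then
        {il | ∃ j, (il.1, j) ∈ C ∧ P il.2 j ≠ OSR.bot ∧ M il.1 il.2 ≠ OSR.bot}
      else
        {lj | ∃ a, (a, lj.2) ∈ C ∧ M a lj.1 ≠ OSR.bot ∧ P lj.1 lj.2 ≠ OSR.bot}
  | c :: _ :: _ :: _ =>
      let M := (FT.label c).M
      if i = 0 then
        {il | ∃ j, (il.1, j) ∈ C ∧ M il.2 j ≠ OSR.bot ∧ M il.1 il.2 ≠ OSR.bot}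
      else if i = cs.length - 1 then
        {lj | ∃ a, (a, lj.2) ∈ C ∧ M a lj.1 ≠ OSR.bot ∧ M lj.1 lj.2 ≠ OSR.bot}
      else
        {lk | ∃ a b, (a, b) ∈ C ∧ M a lk.1 ≠ OSR.bot ∧ M lk.2 b ≠ OSR.bot ∧
              M lk.1 lk.2 ≠ OSR.bot ∧ M lk.2 lk.1 ≠ OSR.bot}
  | _ => ∅

/-- Contributor set of the node at path `π`, starting from the set `C` at the root. -/
def contribAt {QA : Type} {n : ℕ} : FT QA n → Set (Fin n × Fin n) → List ℕ → Set (Fin n × Fin n)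
  | _, C, [] => C
  | FT.leaf _, _, _ :: _ => ∅
  | FT.node _ cs, C, i :: rest =>
      match cs[i]? with
      | none => ∅
      | some c => contribAt c (contribStep cs C i) rest

/-- The contributor set of the root: pairs `(i,j)` with `i` initial in `B`, `j` final in `B`
and `M_{i,j} ≠ -∞`. -/
def rootContrib {Sigma QA : Type} {n : ℕ} (B : MPA Sigma (Fin n)) (t : FT QA n) :
    Set (Fin n × Fin n) :=
  {ij | B.I ij.1 ≠ ⊥ ∧ B.F ij.2 ≠ ⊥ ∧ (FT.label t).M ij.1 ij.2 ≠ OSR.bot}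

/-- The contributor set of the node at path `π` of the tree `t`. -/
def contributors {Sigma QA : Type} {n : ℕ} (B : MPA Sigma (Fin n)) (t : FT QA n)
    (π : List ℕ) : Set (Fin n × Fin n) :=
  contribAt t (rootContrib B t) π

/-- `PathLeaves A B p w xs ls q`: `ls` is the list `α_w(w₁), …, α_w(w_k)` associated with the
run of `A` on `w` from `p` to `q` with transition weights `xs`. -/
def PathLeaves {Sigma QA : Type} {nB : ℕ} (A : MPA Sigma QA) (B : MPA Sigma (Fin nB)) :
    QA → List Sigma → List ℕ → List (Elem QA nB) → QA → Prop
  | p, [], [], [], q => p = q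
  | p, a :: w, x :: xs, e :: ls, q =>
      e.p = p ∧ A.M a p e.q = ((x : ℕ) : WithBot ℕ) ∧ e.x = barNat x ∧
      (e.M = fun i j => barW (B.M a i j)) ∧ PathLeaves A B e.q w xs ls q
  | _, _, _, _, _ => False

/-- `t` is a factorisation tree on the word `w` (for the accepting run of `A` on `w`). -/
def IsFactTreeOn {Sigma QA : Type} {nB : ℕ} [Fintype QA] [DecidableEq QA]
    (A : MPA Sigma QA) (B : MPA Sigma (Fin nB)) (w : List Sigma) (t : FT QA nB) : Prop :=
  FT.WF t ∧ ∃ (p q : QA) (xs : List ℕ),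
    A.I p ≠ ⊥ ∧ A.F q ≠ ⊥ ∧ PathLeaves A B p w xs (FT.leaves t) q

/-- The node of `t` at path `π` is a fault. -/
def IsFaultAt {Sigma QA : Type} {nB : ℕ} (B : MPA Sigma (Fin nB)) (t : FT QA nB)
    (π : List ℕ) : Prop :=
  ∃ σ i, π = σ ++ [i] ∧
    ∃ lbl cs, FT.subtreeAt t σ = some (FT.node lbl cs) ∧ 3 ≤ cs.length ∧
      0 < i ∧ i < cs.length - 1 ∧
      ∃ c, cs[i]? = some c ∧ (FT.label c).x = OSR.one ∧
        ∀ ij ∈ contributors B t π, (FT.label c).M ij.1 ij.2 = OSR.zero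

/-- Number of leaves strictly to the left of the node at path `π`. -/
def offsetAt {QA : Type} {n : ℕ} : FT QA n → List ℕ → ℕ
  | _, [] => 0
  | FT.leaf _, _ :: _ => 0
  | FT.node _ cs, i :: rest =>
      ((cs.take i).map fun c => (FT.leaves c).length).sum +
        match cs[i]? with
        | none => 0
        | some c => offsetAt c rest

/-- Height of the node at path `π`. -/
def heightAt {QA : Type} {n : ℕ} (t : FT QA n) (π : List ℕ) : ℕ :=
  match FT.subtreeAt t π with
  | some c => FT.height c
  | none => 0

/-- The β-labelling: `beta t π` is the β-label of the root of `t`, where `π` is the path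
from the root of `t` down to the fault `ν₁`. -/
def beta {QA : Type} {n : ℕ} : FT QA n → List ℕ → Elem QA n
  | t, [] => FT.label t
  | FT.leaf e, _ :: _ => e
  | FT.node lbl cs, i :: rest =>
      match cs[i]? with
      | none => lbl
      | some c =>
        match rest with
        | [] => estab (FT.label c)
        | j :: rest' =>
          let inner := beta c (j :: rest')
          if cs.length = 2 then
            (if i = 0 then eprod inner ((cs[1]?.map FT.label).getD lbl)
             else eprod ((cs[0]?.map FT.label).getD lbl) inner)
          else
            if i = 0 then eprod inner (FT.label c)
            else if i = cs.length - 1 then eprod (FT.label c) inner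
            else eflat inner

/-!
Relabel the nodes on the path from the root to the fault bottom-up (the β-labelling of the
paper): the idempotent label `e` of the fault, of weight `1`, becomes `e^#`; at a binary node,
and at the first or last child of an idempotent node, the new label of the child is multiplied
by the labels of its siblings; at a middle child of an idempotent node it is flattened. Each new
label lies in `I_{A,B}`, has weight `∞` and the same projection as the old one, and stays
finite at the contributors of its node. For the fault itself this holds because `e^#` can only
be infinite through a diagonal entry `1` of `e` at a contributor, where `e` is `0`; a product
with elements of `S̄_{A,B}` is infinite only through the β-labelled factor, and flattening only
creates infinite entries on cycles of the idempotent label, which are contributors of the middle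
child. At the root this is a witness of non-domination, built from one stabilisation followed by
fewer flattenings than the height of the tree, interleaved with products: a tractable witness.
-/

namespace OSR

instance : Fintype OSR :=
  ⟨⟨[bot, zero, one, inf], by decide⟩, by intro x; cases x <;> decide⟩

theorem add_bot (a : OSR) : a.add bot = bot := by cases a <;> rfl
theorem inf_add {a : OSR} (h : a ≠ bot) : inf.add a = inf := by revert a; decide
theorem add_inf {a : OSR} (h : a ≠ bot) : a.add inf = inf := by revert a; decide
theorem add_assoc (a b c : OSR) : (a.add b).add c = a.add (b.add c) := by revert a b c; decide
theorem add_sup (a b c : OSR) : a.add (b.sup c) = (a.add b).sup (a.add c) := by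
  revert a b c; decide
theorem sup_add (a b c : OSR) : (a.sup b).add c = (a.add c).sup (b.add c) := by
  revert a b c; decide
theorem sup_assoc (a b c : OSR) : (a.sup b).sup c = a.sup (b.sup c) := by revert a b c; decide
theorem sup_left_comm (a b c : OSR) : a.sup (b.sup c) = b.sup (a.sup c) := by
  revert a b c; decide
theorem sup_eq_bot_iff {a b : OSR} : a.sup b = bot ↔ a = bot ∧ b = bot := by revert a b; decide
theorem sup_eq_inf_iff {a b : OSR} : a.sup b = inf ↔ a = inf ∨ b = inf := by revert a b; decide
theorem add_eq_inf_iff {a b : OSR} :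
    a.add b = inf ↔ a ≠ bot ∧ b ≠ bot ∧ (a = inf ∨ b = inf) := by revert a b; decide
theorem add_ne_bot_iff {a b : OSR} : a.add b ≠ bot ↔ a ≠ bot ∧ b ≠ bot := by
  revert a b; decide
theorem bar_add (a b : OSR) : (a.add b).bar = a.bar.add b.bar := by revert a b; decide
theorem bar_sup (a b : OSR) : (a.sup b).bar = a.bar.sup b.bar := by revert a b; decide
theorem bar_bar (a : OSR) : a.bar.bar = a.bar := by cases a <;> rfl
theorem bar_sharp (a : OSR) : a.sharp.bar = a.bar := by cases a <;> rfl
theorem bar_ne_bot_iff {a : OSR} : a.bar ≠ bot ↔ a ≠ bot := by cases a <;> decide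
theorem bar_ne_inf (a : OSR) : a.bar ≠ inf := by cases a <;> decide
theorem sharp_eq_inf_iff {a : OSR} : a.sharp = inf ↔ a = one ∨ a = inf := by revert a; decide

theorem ne_bot_of_bar_eq_bar {a b : OSR} (h : a.bar = b.bar) (ha : a = inf) : b ≠ bot := by
  subst ha; revert b; decide

end OSR

def lsup {α : Type} (l : List α) (f : α → OSR) : OSR :=
  l.foldr (fun j acc => (f j).sup acc) OSR.bot

section lsup

variable {α β : Type}

theorem lsup_cons (x : α) (l : List α) (f : α → OSR) :
    lsup (x :: l) f = (f x).sup (lsup l f) := rfl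

theorem lsup_eq_bot_iff (l : List α) (f : α → OSR) :
    lsup l f = OSR.bot ↔ ∀ x ∈ l, f x = OSR.bot := by
  induction l with
  | nil => simp [lsup]
  | cons a l ih => simp [lsup_cons, OSR.sup_eq_bot_iff, ih]

theorem lsup_eq_inf_iff (l : List α) (f : α → OSR) :
    lsup l f = OSR.inf ↔ ∃ x ∈ l, f x = OSR.inf := by
  induction l with
  | nil => simp [lsup]
  | cons a l ih => simp [lsup_cons, OSR.sup_eq_inf_iff, ih]

theorem add_lsup (a : OSR) (l : List α) (f : α → OSR) :
    a.add (lsup l f) = lsup l (fun x => a.add (f x)) := by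
  induction l with
  | nil => exact OSR.add_bot a
  | cons x l ih => rw [lsup_cons, lsup_cons, OSR.add_sup, ih]

theorem lsup_add (a : OSR) (l : List α) (f : α → OSR) :
    (lsup l f).add a = lsup l (fun x => (f x).add a) := by
  induction l with
  | nil => rfl
  | cons x l ih => rw [lsup_cons, lsup_cons, OSR.sup_add, ih]

theorem lsup_sup (l : List α) (f g : α → OSR) :
    lsup l (fun x => (f x).sup (g x)) = (lsup l f).sup (lsup l g) := by
  induction l with
  | nil => rfl
  | cons x l ih =>
    simp only [lsup_cons, ih, OSR.sup_assoc]
    rw [OSR.sup_left_comm (g x)]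

theorem lsup_comm (l₁ : List α) (l₂ : List β) (g : α → β → OSR) :
    lsup l₁ (fun i => lsup l₂ (g i)) = lsup l₂ (fun j => lsup l₁ (fun i => g i j)) := by
  induction l₁ with
  | nil => exact ((lsup_eq_bot_iff l₂ _).2 fun _ _ => rfl).symm
  | cons x l₁ ih => rw [lsup_cons, ih, ← lsup_sup]; rfl

theorem bar_lsup (l : List α) (f : α → OSR) :
    (lsup l f).bar = lsup l (fun x => (f x).bar) := by
  induction l with
  | nil => rfl
  | cons x l ih => rw [lsup_cons, lsup_cons, OSR.bar_sup, ih]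

end lsup

section Matrix

variable {n : ℕ}

theorem osum_eq_lsup (f : Fin n → OSR) : osum f = lsup (List.finRange n) f := rfl

theorem osum_eq_bot_iff (f : Fin n → OSR) : osum f = OSR.bot ↔ ∀ j, f j = OSR.bot := by
  simp [osum_eq_lsup, lsup_eq_bot_iff]

theorem osum_eq_inf_iff (f : Fin n → OSR) : osum f = OSR.inf ↔ ∃ j, f j = OSR.inf := by
  simp [osum_eq_lsup, lsup_eq_inf_iff]

theorem omul_assoc (M N P : Fin n → Fin n → OSR) :
    omul (omul M N) P = omul M (omul N P) := by
  funext i l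
  simp only [omul, osum_eq_lsup, lsup_add, add_lsup, OSR.add_assoc]
  exact lsup_comm _ _ _

theorem obar_omul (M N : Fin n → Fin n → OSR) :
    obar (omul M N) = omul (obar M) (obar N) := by
  funext i k
  simp only [obar, omul, osum_eq_lsup, bar_lsup, OSR.bar_add]

theorem obar_obar (M : Fin n → Fin n → OSR) : obar (obar M) = obar M := by
  funext i j; exact OSR.bar_bar _

theorem omul_eq_inf_iff {M N : Fin n → Fin n → OSR} {i k : Fin n} :
    omul M N i k = OSR.inf ↔ ∃ j, (M i j).add (N j k) = OSR.inf :=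
  osum_eq_inf_iff _

theorem omul_ne_bot {M N : Fin n → Fin n → OSR} {i k : Fin n} (j : Fin n)
    (h₁ : M i j ≠ OSR.bot) (h₂ : N j k ≠ OSR.bot) : omul M N i k ≠ OSR.bot := fun h =>
  OSR.add_ne_bot_iff.2 ⟨h₁, h₂⟩ ((osum_eq_bot_iff _).1 h j)

theorem ne_bot_trans {D : Fin n → Fin n → OSR} (hD : omul D D = D) {x y z : Fin n}
    (h₁ : D x y ≠ OSR.bot) (h₂ : D y z ≠ OSR.bot) : D x z ≠ OSR.bot := by
  rw [← hD]; exact omul_ne_bot y h₁ h₂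

theorem ne_inf_of_obar_eq {M : Fin n → Fin n → OSR} (h : obar M = M) (i j : Fin n) :
    M i j ≠ OSR.inf := by
  rw [← h]; exact OSR.bar_ne_inf _

theorem obar_mstab {M : Fin n → Fin n → OSR} (h : omul M M = M) : obar (mstab M) = obar M := by
  have hD : omul (obar M) (obar M) = obar M := by rw [← obar_omul, h]
  have hdiag : obar (mdiagSharp M) = obar M := by
    funext i j
    unfold obar mdiagSharp
    split_ifs
    exacts [OSR.bar_sharp _, rfl]
  rw [mstab, obar_omul, obar_omul, hdiag, hD, hD]

theorem obar_mflat {N : Fin n → Fin n → OSR} (h : omul (obar N) (obar N) = obar N) :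
    obar (mflat N) = obar N := by
  have hangle : ∀ P : Fin n → Fin n → OSR, obar (mangle P) = obar P := by
    intro P; funext i j
    unfold obar mangle
    split_ifs
    exacts [rfl, OSR.bar_bar _]
  rw [mflat, obar_omul, obar_omul, hangle, obar_obar, obar_omul, obar_omul, h, h, h, h]

theorem mstab_eq_inf {M : Fin n → Fin n → OSR} (hM : obar M = M) {i j : Fin n}
    (h : mstab M i j = OSR.inf) :
    ∃ k, M i k ≠ OSR.bot ∧ M k k = OSR.one ∧ M k j ≠ OSR.bot := by
  have hfin := ne_inf_of_obar_eq hM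
  obtain ⟨l, hl₁, hl₂, hl | hl⟩ := omul_eq_inf_iff.1 h |>.imp fun _ => OSR.add_eq_inf_iff.1
  swap
  · exact absurd hl (hfin l j)
  obtain ⟨k, hk₁, -, hk | hk⟩ := omul_eq_inf_iff.1 hl |>.imp fun _ => OSR.add_eq_inf_iff.1
  · exact absurd hk (hfin i k)
  unfold mdiagSharp at hk
  split_ifs at hk with hkl
  · subst hkl
    rcases OSR.sharp_eq_inf_iff.1 hk with hk | hk
    · exact ⟨k, hk₁, hk, hl₂⟩
    · exact absurd hk (hfin k k)
  · exact absurd hk (hfin k l)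

theorem mflat_eq_inf {N : Fin n → Fin n → OSR} {i j : Fin n} (h : mflat N i j = OSR.inf) :
    ∃ k u v, obar N i k ≠ OSR.bot ∧ obar N k j ≠ OSR.bot ∧
      N k u ≠ OSR.bot ∧ N u v ≠ OSR.bot ∧ N v k ≠ OSR.bot ∧
      (N k u = OSR.inf ∨ N u v = OSR.inf ∨ N v k = OSR.inf) := by
  have hfin := ne_inf_of_obar_eq (obar_obar N)
  obtain ⟨k, hik, -, hk | hk⟩ := omul_eq_inf_iff.1 h |>.imp fun _ => OSR.add_eq_inf_iff.1
  · exact absurd hk (hfin i k)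
  obtain ⟨l, -, hlj, hl | hl⟩ := omul_eq_inf_iff.1 hk |>.imp fun _ => OSR.add_eq_inf_iff.1
  swap
  · exact absurd hl (hfin l j)
  unfold mangle at hl
  split_ifs at hl with hkl
  swap
  · exact absurd hl (OSR.bar_ne_inf _)
  subst hkl
  obtain ⟨u, hku, huk, hu | hu⟩ := omul_eq_inf_iff.1 hl |>.imp fun _ => OSR.add_eq_inf_iff.1
  · obtain ⟨v, huv, hvk⟩ := (osum_eq_bot_iff _).not.1 huk |> not_forall.1 |>.imp
      fun _ => OSR.add_ne_bot_iff.1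
    exact ⟨k, u, v, hik, hlj, hku, huv, hvk, Or.inl hu⟩
  · obtain ⟨v, huv, hvk, hv⟩ := omul_eq_inf_iff.1 hu |>.imp fun _ => OSR.add_eq_inf_iff.1
    exact ⟨k, u, v, hik, hlj, hku, huv, hvk, Or.inr hv⟩

end Matrix

section Elements

variable {QA : Type} {n : ℕ} {e : Elem QA n}

theorem eprod_assoc (a b c : Elem QA n) : eprod (eprod a b) c = eprod a (eprod b c) := by
  simp only [eprod, OSR.add_assoc, omul_assoc]

theorem ebar_eprod (a b : Elem QA n) : ebar (eprod a b) = eprod (ebar a) (ebar b) := by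
  simp only [ebar, eprod, OSR.bar_add, obar_omul]

theorem ebar_estab (hpq : e.p = e.q) (hM : omul e.M e.M = e.M) : ebar (estab e) = ebar e := by
  simp only [ebar, estab, OSR.bar_sharp, obar_mstab hM, hpq]

theorem ebar_eflat (hpq : e.p = e.q) (hM : omul (obar e.M) (obar e.M) = obar e.M) :
    ebar (eflat e) = ebar e := by
  simp only [ebar, eflat, obar_mflat hM, hpq]

theorem extWrap_p (g g' : Option (Elem QA n)) : (extWrap g e g').p = (g.getD e).p := by
  cases g <;> cases g' <;> rfl

theorem extWrap_q (g g' : Option (Elem QA n)) : (extWrap g e g').q = (g'.getD e).q := by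
  cases g <;> cases g' <;> rfl

theorem barW_bar (v : WithBot ℕ) : (barW v).bar = barW v := by
  induction v using WithBot.recBotCoe with
  | bot => rfl
  | coe m => simp only [barW, WithBot.recBotCoe_coe]; split_ifs <;> rfl

theorem barW_ne_bot_iff {v : WithBot ℕ} : barW v ≠ OSR.bot ↔ v ≠ ⊥ := by
  induction v using WithBot.recBotCoe with
  | bot => simp [barW]
  | coe m => simp only [barW, WithBot.recBotCoe_coe]; split_ifs <;> simp

theorem barW_ne_inf (v : WithBot ℕ) : barW v ≠ OSR.inf := by
  rw [← barW_bar]; exact OSR.bar_ne_inf _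

theorem barNat_ne_bot (x : ℕ) : barNat x ≠ OSR.bot := by
  unfold barNat; split_ifs <;> decide

variable {Sigma : Type} [DecidableEq QA] {A : MPA Sigma QA} {B : MPA Sigma (Fin n)}
  {f : Elem QA n}

theorem InPathsO.eprod (he : InPathsO A B (some e)) (hf : InPathsO A B (some f))
    (hq : e.q = f.p) : InPathsO A B (some (eprod e f)) := by
  simpa [omulO, hq] using InPathsO.mul _ _ he hf

theorem InAsympO.eprod (he : InAsympO A B (some e)) (hf : InAsympO A B (some f))
    (hq : e.q = f.p) : InAsympO A B (some (eprod e f)) := by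
  simpa [omulO, hq] using InAsympO.mul _ _ he hf

theorem InPathsO.inAsympO {x : Option (Elem QA n)} (h : InPathsO A B x) : InAsympO A B x := by
  induction h with
  | gen e he => exact .gen e he
  | mul x y _ _ ihx ihy => exact .mul x y ihx ihy

theorem InPathsO.x_ne_bot_and_obar_eq (h : InPathsO A B (some e)) :
    e.x ≠ OSR.bot ∧ obar e.M = e.M := by
  generalize hx : some e = x at h
  induction h generalizing e with
  | gen e' he =>
    cases hx
    obtain ⟨a, p, q, x, -, rfl⟩ := he
    exact ⟨barNat_ne_bot x, funext fun i => funext fun j => barW_bar _⟩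
  | mul x y _ _ ihx ihy =>
    match x, y, hx with
    | some a, some b, hx =>
      simp only [omulO] at hx
      split_ifs at hx
      cases hx
      obtain ⟨hax, haM⟩ := ihx rfl
      obtain ⟨hbx, hbM⟩ := ihy rfl
      refine ⟨OSR.add_ne_bot_iff.2 ⟨hax, hbx⟩, ?_⟩
      simp only [_root_.eprod]
      rw [obar_omul, haM, hbM]

end Elements

section Trees

variable {QA : Type} {n : ℕ} {lbl : Elem QA n} {c : FT QA n} {cs : List (FT QA n)}

def IsRun : QA → List (Elem QA n) → QA → Prop
  | p, [], q => p = q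
  | p, e :: l, q => e.p = p ∧ IsRun e.q l q

theorem isRun_append {p q : QA} {l₁ l₂ : List (Elem QA n)} :
    IsRun p (l₁ ++ l₂) q ↔ ∃ r, IsRun p l₁ r ∧ IsRun r l₂ q := by
  induction l₁ generalizing p with
  | nil => simp [IsRun]
  | cons e l₁ ih => simp [IsRun, ih, and_assoc]

theorem PathLeaves.isRun_and_isGen {Sigma : Type} {A : MPA Sigma QA} {B : MPA Sigma (Fin n)}
    {p q : QA} {w : List Sigma} {xs : List ℕ} {ls : List (Elem QA n)}
    (h : PathLeaves A B p w xs ls q) : IsRun p ls q ∧ ∀ e ∈ ls, IsGen A B e := by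
  induction ls generalizing p w xs with
  | nil => cases w <;> cases xs <;> simp_all [PathLeaves, IsRun]
  | cons e ls ih =>
    rcases w with _ | ⟨a, w⟩ <;> rcases xs with _ | ⟨x, xs⟩ <;> try simp [PathLeaves] at h
    obtain ⟨hp, hM, hx, hMat, hrest⟩ := h
    obtain ⟨hrun, hgen⟩ := ih hrest
    refine ⟨⟨hp, hrun⟩, fun f hf => ?_⟩
    rcases List.mem_cons.1 hf with rfl | hf
    · exact ⟨a, p, f.q, x, hM, by cases f; simp_all⟩
    · exact hgen f hf

theorem FT.leavesList_eq_flatMap (cs : List (FT QA n)) :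
    FT.leavesList cs = cs.flatMap FT.leaves := by
  induction cs with
  | nil => rfl
  | cons c cs ih => rw [FT.leavesList, ih, List.flatMap_cons]

theorem FT.mem_leaves_node {e : Elem QA n} (hc : c ∈ cs) (he : e ∈ c.leaves) :
    e ∈ (FT.node lbl cs).leaves := by
  simpa [FT.leaves, FT.leavesList_eq_flatMap] using ⟨c, hc, he⟩

theorem FT.WF.of_mem (ht : (FT.node lbl cs).WF) (hc : c ∈ cs) : c.WF := by
  cases ht with
  | node _ _ _ hwf => exact hwf c hc

theorem foldl_eprod_p (l : List (Elem QA n)) (h : Elem QA n) : (l.foldl eprod h).p = h.p := by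
  induction l generalizing h with
  | nil => rfl
  | cons x l ih => exact ih _

theorem foldl_eprod_labels_q
    (hcs : ∀ c ∈ cs, ∀ p q, IsRun p c.leaves q → c.label.p = p ∧ c.label.q = q)
    {h : Elem QA n} {q : QA} (hrun : IsRun h.q (FT.leavesList cs) q) :
    ((cs.map FT.label).foldl eprod h).q = q := by
  induction cs generalizing h with
  | nil => exact hrun
  | cons c cs ih =>
    obtain ⟨r, hc, hrest⟩ := isRun_append.1 hrun
    have hcq := (hcs c (by simp) _ _ hc).2
    exact ih (fun d hd => hcs d (by simp [hd])) (h := eprod h c.label) (hcq ▸ hrest)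

theorem FT.WF.label_p_q {t : FT QA n} (ht : t.WF) {p q : QA} (hrun : IsRun p t.leaves q) :
    t.label.p = p ∧ t.label.q = q := by
  induction ht generalizing p q with
  | leaf e => exact ⟨hrun.1, hrun.2⟩
  | node lbl cs hlen _ _ hfold _ ih =>
    obtain ⟨c, cs, rfl⟩ := List.exists_cons_of_length_pos (by omega : 0 < cs.length)
    rw [hfold _ _ (List.map_cons ..)]
    obtain ⟨r, hc, hrest⟩ := isRun_append.1 hrun
    obtain ⟨hcp, hcq⟩ := ih c (by simp) hc
    exact ⟨(foldl_eprod_p _ _).trans hcp,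
      foldl_eprod_labels_q (fun d hd _ _ => ih d (by simp [hd])) (hcq ▸ hrest)⟩

theorem FT.height_le_heightList (hc : c ∈ cs) : c.height ≤ FT.heightList cs := by
  induction cs with
  | nil => cases hc
  | cons d cs ih =>
    rw [FT.heightList]
    rcases List.mem_cons.1 hc with rfl | hc
    exacts [le_max_left _ _, (ih hc).trans (le_max_right _ _)]

theorem FT.length_add_height_le_of_subtreeAt :
    ∀ (σ : List ℕ) (t s : FT QA n), t.subtreeAt σ = some s →
      σ.length + s.height ≤ t.height
  | [], t, s, h => by cases h; simp
  | i :: σ, .leaf _, s, h => by simp [FT.subtreeAt, FT.childAt] at h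
  | i :: σ, .node lbl cs, s, h => by
    obtain ⟨c, hc, hs⟩ : ∃ c, cs[i]? = some c ∧ c.subtreeAt σ = some s := by
      simpa [FT.subtreeAt, FT.childAt, Option.bind_eq_some_iff] using h
    have := FT.length_add_height_le_of_subtreeAt σ c s hs
    have := FT.height_le_heightList (List.mem_of_getElem? hc)
    simp only [FT.height, List.length_cons]
    omega

variable {Sigma : Type} [DecidableEq QA] {A : MPA Sigma QA} {B : MPA Sigma (Fin n)}

theorem foldl_eprod_mem_paths {l : List (Elem QA n)} {h : Elem QA n}
    (hh : InPathsO A B (some h)) (hl : ∀ e ∈ l, InPathsO A B (some e))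
    (hchain : List.IsChain (fun a b : Elem QA n => a.q = b.p) (h :: l)) :
    InPathsO A B (some (l.foldl eprod h)) := by
  induction l generalizing h with
  | nil => exact hh
  | cons x l ih =>
    rw [List.isChain_cons_cons] at hchain
    refine ih (hh.eprod (hl x (by simp)) hchain.1) (fun e he => hl e (by simp [he])) ?_
    cases l with
    | nil => exact List.isChain_singleton _
    | cons y l => exact List.isChain_cons_cons.2 (List.isChain_cons_cons.1 hchain.2)

theorem FT.WF.label_mem_paths {t : FT QA n} (ht : t.WF)
    (hleaves : ∀ e ∈ t.leaves, InPathsO A B (some e)) : InPathsO A B (some t.label) := by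
  induction ht with
  | leaf e => exact hleaves e (by simp [FT.leaves])
  | node lbl cs hlen _ hchain hfold _ ih =>
    obtain ⟨c, cs, rfl⟩ := List.exists_cons_of_length_pos (by omega : 0 < cs.length)
    simp only [FT.leaves, FT.leavesList_eq_flatMap, List.mem_flatMap] at hleaves
    have hmem : ∀ d ∈ c :: cs, InPathsO A B (some d.label) :=
      fun d hd => ih d hd fun e he => hleaves e ⟨d, hd, he⟩
    rw [FT.label, hfold _ _ (List.map_cons ..)]
    exact foldl_eprod_mem_paths (hmem c (by simp))
      (by simpa using fun d hd => hmem d (by simp [hd])) hchain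

theorem FT.WF.label_mem_paths_of_mem (ht : (FT.node lbl cs).WF)
    (hleaves : ∀ e ∈ (FT.node lbl cs).leaves, InPathsO A B (some e)) (hc : c ∈ cs) :
    InPathsO A B (some c.label) :=
  (ht.of_mem hc).label_mem_paths fun e he => hleaves e (FT.mem_leaves_node hc he)

end Trees

section Contributors

variable {QA : Type} {n : ℕ} {C : Set (Fin n × Fin n)} {lbl : Elem QA n}
  {c c₁ c₂ c₃ : FT QA n} {cs : List (FT QA n)} {i j : ℕ} {r : List ℕ}

def leftContrib (C : Set (Fin n × Fin n)) (M P : Fin n → Fin n → OSR) :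
    Set (Fin n × Fin n) :=
  {il | ∃ j, (il.1, j) ∈ C ∧ P il.2 j ≠ OSR.bot ∧ M il.1 il.2 ≠ OSR.bot}

def rightContrib (C : Set (Fin n × Fin n)) (M P : Fin n → Fin n → OSR) :
    Set (Fin n × Fin n) :=
  {lj | ∃ a, (a, lj.2) ∈ C ∧ M a lj.1 ≠ OSR.bot ∧ P lj.1 lj.2 ≠ OSR.bot}

def midContrib (C : Set (Fin n × Fin n)) (M : Fin n → Fin n → OSR) : Set (Fin n × Fin n) :=
  {lk | ∃ a b, (a, b) ∈ C ∧ M a lk.1 ≠ OSR.bot ∧ M lk.2 b ≠ OSR.bot ∧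
    M lk.1 lk.2 ≠ OSR.bot ∧ M lk.2 lk.1 ≠ OSR.bot}

theorem contribStep_pair_zero :
    contribStep [c₁, c₂] C 0 = leftContrib C c₁.label.M c₂.label.M := rfl

theorem contribStep_pair_one :
    contribStep [c₁, c₂] C 1 = rightContrib C c₁.label.M c₂.label.M := rfl

theorem contribStep_idem_zero :
    contribStep (c₁ :: c₂ :: c₃ :: cs) C 0 = leftContrib C c₁.label.M c₁.label.M := rfl

theorem contribStep_idem_last :
    contribStep (c₁ :: c₂ :: c₃ :: cs) C (cs.length + 2) =
      rightContrib C c₁.label.M c₁.label.M := by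
  simp [contribStep, rightContrib]

theorem contribStep_idem_mid (hi : i ≠ 0) (hlast : i ≠ cs.length + 2) :
    contribStep (c₁ :: c₂ :: c₃ :: cs) C i = midContrib C c₁.label.M := by
  simp [contribStep, midContrib, hi, hlast]

theorem contribAt_nil (t : FT QA n) (C : Set (Fin n × Fin n)) : contribAt t C [] = C := by
  cases t <;> rfl

theorem contribAt_node (hc : cs[i]? = some c) (rest : List ℕ) :
    contribAt (.node lbl cs) C (i :: rest) = contribAt c (contribStep cs C i) rest := by
  simp [contribAt, hc]

theorem beta_node_singleton (hc : cs[i]? = some c) :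
    beta (.node lbl cs) [i] = estab c.label := by
  simp [beta, hc]

theorem beta_pair_zero :
    beta (.node lbl [c₁, c₂]) (0 :: j :: r) = eprod (beta c₁ (j :: r)) c₂.label := by
  simp [beta]

theorem beta_pair_one :
    beta (.node lbl [c₁, c₂]) (1 :: j :: r) = eprod c₁.label (beta c₂ (j :: r)) := by
  simp [beta]

theorem beta_idem_zero :
    beta (.node lbl (c₁ :: c₂ :: c₃ :: cs)) (0 :: j :: r) =
      eprod (beta c₁ (j :: r)) c₁.label := by
  simp [beta]

theorem beta_idem_last (hc : (c₁ :: c₂ :: c₃ :: cs)[cs.length + 2]? = some c) :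
    beta (.node lbl (c₁ :: c₂ :: c₃ :: cs)) ((cs.length + 2) :: j :: r) =
      eprod c.label (beta c (j :: r)) := by
  obtain rfl : (c₃ :: cs)[cs.length] = c := by simpa using hc
  simp [beta]

theorem beta_idem_mid (hc : (c₁ :: c₂ :: c₃ :: cs)[i]? = some c) (hi : i ≠ 0)
    (hlast : i ≠ cs.length + 2) :
    beta (.node lbl (c₁ :: c₂ :: c₃ :: cs)) (i :: j :: r) = eflat (beta c (j :: r)) := by
  simp [beta, hc, hi, hlast]

end Contributors

section UnboundedLift

variable {Sigma QA : Type} {n : ℕ} [DecidableEq QA] {A : MPA Sigma QA} {B : MPA Sigma (Fin n)}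
  {C : Set (Fin n × Fin n)} {e l P : Elem QA n}

/-- The invariant of the paper's label `β(ν)` relative to `α(ν) = l`, where `C` is the set of
contributors of `ν`. -/
structure IsUnboundedLift (A : MPA Sigma QA) (B : MPA Sigma (Fin n))
    (C : Set (Fin n × Fin n)) (e l : Elem QA n) : Prop where
  mem : InAsympO A B (some e)
  ebar_eq : ebar e = ebar l
  x_eq : e.x = OSR.inf
  ne_inf : ∀ a b, (a, b) ∈ C → e.M a b ≠ OSR.inf

theorem IsUnboundedLift.p_eq (h : IsUnboundedLift A B C e l) : e.p = l.p :=
  (congrArg Elem.p h.ebar_eq :)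

theorem IsUnboundedLift.q_eq (h : IsUnboundedLift A B C e l) : e.q = l.q :=
  (congrArg Elem.q h.ebar_eq :)

theorem IsUnboundedLift.obar_eq (h : IsUnboundedLift A B C e l) : obar e.M = obar l.M :=
  congrArg Elem.M h.ebar_eq

theorem IsUnboundedLift.ne_bot_of_eq_inf (h : IsUnboundedLift A B C e l) {a b : Fin n}
    (hab : e.M a b = OSR.inf) : l.M a b ≠ OSR.bot :=
  OSR.ne_bot_of_bar_eq_bar (congrFun (congrFun h.obar_eq a) b) hab

theorem isUnboundedLift_estab (hl : InPathsO A B (some l)) (hpq : l.p = l.q)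
    (hM : omul l.M l.M = l.M) (hx : l.x = OSR.one)
    (hzero : ∀ ij ∈ midContrib C l.M, l.M ij.1 ij.2 = OSR.zero) :
    IsUnboundedLift A B C (estab l) l where
  mem := .stab l hl.inAsympO ⟨hpq, by rw [← obar_omul, hM]⟩
  ebar_eq := ebar_estab hpq hM
  x_eq := by simp [estab, hx, OSR.sharp]
  ne_inf a b hab hinf := by
    obtain ⟨k, hak, hkk, hkb⟩ := mstab_eq_inf hl.x_ne_bot_and_obar_eq.2 hinf
    have hkk' : l.M k k ≠ OSR.bot := by simp [hkk]
    simpa [hkk] using hzero (k, k) ⟨a, b, hab, hak, hkb, hkk', hkk'⟩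

theorem IsUnboundedLift.eprod_right (h : IsUnboundedLift A B (leftContrib C l.M P.M) e l)
    (hP : InPathsO A B (some P)) (hq : l.q = P.p) :
    IsUnboundedLift A B C (eprod e P) (eprod l P) where
  mem := h.mem.eprod hP.inAsympO (h.q_eq ▸ hq)
  ebar_eq := by rw [ebar_eprod, ebar_eprod, h.ebar_eq]
  x_eq := by simp [eprod, h.x_eq, OSR.inf_add hP.x_ne_bot_and_obar_eq.1]
  ne_inf a b hab hinf := by
    obtain ⟨ℓ, haℓ, hℓb, hinf' | hinf'⟩ :=
      omul_eq_inf_iff.1 hinf |>.imp fun _ => OSR.add_eq_inf_iff.1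
    · exact h.ne_inf a ℓ ⟨b, hab, hℓb, h.ne_bot_of_eq_inf hinf'⟩ hinf'
    · exact ne_inf_of_obar_eq hP.x_ne_bot_and_obar_eq.2 ℓ b hinf'

theorem IsUnboundedLift.eprod_left (h : IsUnboundedLift A B (rightContrib C P.M l.M) e l)
    (hP : InPathsO A B (some P)) (hq : P.q = l.p) :
    IsUnboundedLift A B C (eprod P e) (eprod P l) where
  mem := hP.inAsympO.eprod h.mem (h.p_eq ▸ hq)
  ebar_eq := by rw [ebar_eprod, ebar_eprod, h.ebar_eq]
  x_eq := by simp [eprod, h.x_eq, OSR.add_inf hP.x_ne_bot_and_obar_eq.1]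
  ne_inf a b hab hinf := by
    obtain ⟨ℓ, haℓ, hℓb, hinf' | hinf'⟩ :=
      omul_eq_inf_iff.1 hinf |>.imp fun _ => OSR.add_eq_inf_iff.1
    · exact ne_inf_of_obar_eq hP.x_ne_bot_and_obar_eq.2 a ℓ hinf'
    · exact h.ne_inf ℓ b ⟨a, hab, haℓ, h.ne_bot_of_eq_inf hinf'⟩ hinf'

/-- An infinite entry of `e^♭` comes from an infinite entry of `e` on a cycle of the idempotent
`l`, and such an entry is a middle contributor. -/
theorem IsUnboundedLift.eflat (h : IsUnboundedLift A B (midContrib C l.M) e l)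
    (hpq : l.p = l.q) (hM : omul l.M l.M = l.M) (hl : obar l.M = l.M) :
    IsUnboundedLift A B C (eflat e) l := by
  have hbar : obar e.M = l.M := h.obar_eq.trans hl
  have hpi : pathIdem e := ⟨by rw [h.p_eq, h.q_eq, hpq], by rw [hbar, hM]⟩
  refine ⟨.flat e h.mem hpi, (ebar_eflat hpi.1 hpi.2).trans h.ebar_eq, h.x_eq, ?_⟩
  intro a b hab hinf
  obtain ⟨k, u, v, hak, hkb, hku, huv, hvk, hcyc⟩ := mflat_eq_inf hinf
  rw [hbar] at hak hkb
  have toL : ∀ {x y}, e.M x y ≠ OSR.bot → l.M x y ≠ OSR.bot := fun hxy => by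
    rw [← hbar]; exact OSR.bar_ne_bot_iff.2 hxy
  have T : ∀ {x y z}, l.M x y ≠ OSR.bot → l.M y z ≠ OSR.bot → l.M x z ≠ OSR.bot :=
    ne_bot_trans hM
  replace hku := toL hku
  replace huv := toL huv
  replace hvk := toL hvk
  rcases hcyc with hcyc | hcyc | hcyc
  · exact h.ne_inf k u ⟨a, b, hab, hak, T (T huv hvk) hkb, hku, T huv hvk⟩ hcyc
  · exact h.ne_inf u v ⟨a, b, hab, T hak hku, T hvk hkb, huv, T hvk hku⟩ hcyc
  · exact h.ne_inf v k ⟨a, b, hab, T (T hak hku) huv, hkb, hvk, T hku huv⟩ hcyc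

theorem IsUnboundedLift.isWitness {t : FT QA n}
    (h : IsUnboundedLift A B (rootContrib B t) e t.label)
    (hI : A.I t.label.p ≠ ⊥) (hF : A.F t.label.q ≠ ⊥) : IsWitness A B e := by
  refine ⟨h.p_eq ▸ hI, h.q_eq ▸ hF, h.x_eq, fun hinf => ?_⟩
  obtain ⟨i, hi⟩ := (osum_eq_inf_iff _).1 hinf
  obtain ⟨j, hj⟩ := (osum_eq_inf_iff _).1 hi
  obtain ⟨hIi, -, hj | hj⟩ := OSR.add_eq_inf_iff.1 hj
  · exact barW_ne_inf _ hj
  obtain ⟨-, hFj, hij | hij⟩ := OSR.add_eq_inf_iff.1 hj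
  · exact h.ne_inf i j
      ⟨barW_ne_bot_iff.1 hIi, barW_ne_bot_iff.1 hFj, h.ne_bot_of_eq_inf hij⟩ hij
  · exact barW_ne_inf _ hij

end UnboundedLift

section Tractable

variable {Sigma QA : Type} {n : ℕ} [DecidableEq QA] {A : MPA Sigma QA} {B : MPA Sigma (Fin n)}
  {k : ℕ} {e P : Elem QA n}

/-- The second conjunct of `IsTractableWitness`, with the bound `3 * sizeS A B` replaced by `k`. -/
def IsTractable (A : MPA Sigma QA) (B : MPA Sigma (Fin n)) (k : ℕ) (wit : Elem QA n) : Prop :=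
  ∃ (m : ℕ) (e : Elem QA n) (g g' : Option (Elem QA n)),
    m + 1 ≤ k ∧ TractCore A B m e ∧ InPathsOpt A B g ∧ InPathsOpt A B g' ∧
    (∀ a, g = some a → a.q = e.p) ∧ (∀ b, g' = some b → e.q = b.p) ∧
    wit = extWrap g e g'

theorem isTractable_estab (he : InPathsO A B (some e)) (hpi : pathIdem e) :
    IsTractable A B 1 (estab e) :=
  ⟨0, _, none, none, le_rfl, .base e he hpi, trivial, trivial, nofun, nofun, rfl⟩

theorem IsTractable.mono {k' : ℕ} (h : IsTractable A B k e) (hk : k ≤ k') :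
    IsTractable A B k' e := by
  obtain ⟨m, e₀, g, g', hm, rest⟩ := h
  exact ⟨m, e₀, g, g', hm.trans hk, rest⟩

theorem IsTractable.eflat (h : IsTractable A B k e) (hpi : pathIdem e) :
    IsTractable A B (k + 1) (eflat e) := by
  obtain ⟨m, e₀, g, g', hm, hcore, hg, hg', hgq, hg'q, rfl⟩ := h
  exact ⟨m + 1, _, none, none, by omega, .step m e₀ g g' hcore hg hg' hgq hg'q hpi,
    trivial, trivial, nofun, nofun, rfl⟩

theorem IsTractable.eprod_right (h : IsTractable A B k e) (hP : InPathsO A B (some P))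
    (hq : e.q = P.p) : IsTractable A B k (eprod e P) := by
  obtain ⟨m, e₀, g, g', hm, hcore, hg, hg', hgq, hg'q, rfl⟩ := h
  rw [extWrap_q] at hq
  cases g' with
  | none =>
    refine ⟨m, e₀, g, some P, hm, hcore, hg, hP, hgq,
      fun b hb => Option.some_inj.1 hb ▸ hq, ?_⟩
    cases g <;> simp [extWrap, eprod_assoc]
  | some b =>
    refine ⟨m, e₀, g, some (eprod b P), hm, hcore, hg, InPathsO.eprod hg' hP hq, hgq,
      fun b' hb' => Option.some_inj.1 hb' ▸ hg'q b rfl, ?_⟩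
    cases g <;> simp [extWrap, eprod_assoc]

theorem IsTractable.eprod_left (h : IsTractable A B k e) (hP : InPathsO A B (some P))
    (hp : P.q = e.p) : IsTractable A B k (eprod P e) := by
  obtain ⟨m, e₀, g, g', hm, hcore, hg, hg', hgq, hg'q, rfl⟩ := h
  rw [extWrap_p] at hp
  cases g with
  | none =>
    refine ⟨m, e₀, some P, g', hm, hcore, hP, hg',
      fun a ha => Option.some_inj.1 ha ▸ hp, hg'q, ?_⟩
    cases g' <;> simp [extWrap]
  | some a =>
    refine ⟨m, e₀, some (eprod P a), g', hm, hcore, InPathsO.eprod hP hg hp,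
      hg', fun a' ha' => Option.some_inj.1 ha' ▸ hgq a rfl, hg'q, ?_⟩
    cases g' <;> simp [extWrap, eprod_assoc]

end Tractable

section Beta

variable {Sigma QA : Type} {n : ℕ} [DecidableEq QA] {A : MPA Sigma QA} {B : MPA Sigma (Fin n)}
  {C : Set (Fin n × Fin n)} {lbl : Elem QA n} {c c₁ c₂ c₃ : FT QA n} {cs : List (FT QA n)}
  {i j k : ℕ} {r : List ℕ}

/-- `IsFaultAt` for the `i`-th child of a node with children `cs`, whose contributors are `D`. -/
def IsFaultyChild (cs : List (FT QA n)) (i : ℕ) (D : Set (Fin n × Fin n)) : Prop :=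
  3 ≤ cs.length ∧ 0 < i ∧ i < cs.length - 1 ∧
    ∃ c, cs[i]? = some c ∧ (FT.label c).x = OSR.one ∧
      ∀ ij ∈ D, (FT.label c).M ij.1 ij.2 = OSR.zero

theorem beta_spec_fault (ht : (FT.node lbl cs).WF)
    (hleaves : ∀ e ∈ (FT.node lbl cs).leaves, InPathsO A B (some e))
    (hfault : IsFaultyChild cs i (contribStep cs C i)) :
    IsUnboundedLift A B C (beta (.node lbl cs) [i]) lbl ∧
      IsTractable A B 1 (beta (.node lbl cs) [i]) := by
  obtain ⟨hlen, hi₀, hilast, c, hc, hx, hzero⟩ := hfault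
  have hmem := ht.label_mem_paths_of_mem hleaves (List.mem_of_getElem? hc)
  cases ht with
  | node _ _ _ _ _ _ hidem =>
  obtain ⟨hpq, hid, hall⟩ := hidem hlen
  have hM : omul lbl.M lbl.M = lbl.M := congrArg Elem.M hid
  match cs, hlen with
  | c₁ :: c₂ :: c₃ :: cs, _ =>
    simp only [List.length_cons] at hilast
    rw [contribStep_idem_mid (by omega) (by omega), hall c₁ (by simp)] at hzero
    rw [beta_node_singleton hc]
    rw [hall c (List.mem_of_getElem? hc)] at hmem hx hzero ⊢
    exact ⟨isUnboundedLift_estab hmem hpq hM hx hzero,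
      isTractable_estab hmem ⟨hpq, by rw [← obar_omul, hM]⟩⟩

theorem beta_spec_pair (hlbl : lbl = eprod c₁.label c₂.label) (hq : c₁.label.q = c₂.label.p)
    (h₁ : InPathsO A B (some c₁.label)) (h₂ : InPathsO A B (some c₂.label))
    (hc : [c₁, c₂][i]? = some c)
    (hlift : IsUnboundedLift A B (contribStep [c₁, c₂] C i) (beta c (j :: r)) c.label)
    (htr : IsTractable A B k (beta c (j :: r))) :
    IsUnboundedLift A B C (beta (.node lbl [c₁, c₂]) (i :: j :: r)) lbl ∧
      IsTractable A B (k + 1) (beta (.node lbl [c₁, c₂]) (i :: j :: r)) := by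
  subst hlbl
  match i, hc with
  | 0, rfl =>
    rw [contribStep_pair_zero] at hlift
    rw [beta_pair_zero]
    exact ⟨hlift.eprod_right h₂ hq,
      (htr.eprod_right h₂ (hlift.q_eq.trans hq)).mono (by omega)⟩
  | 1, rfl =>
    rw [contribStep_pair_one] at hlift
    rw [beta_pair_one]
    exact ⟨hlift.eprod_left h₁ hq,
      (htr.eprod_left h₁ (hq.trans hlift.p_eq.symm)).mono (by omega)⟩

theorem beta_spec_idem (hpq : lbl.p = lbl.q) (hidem : eprod lbl lbl = lbl)
    (hmem : InPathsO A B (some lbl)) (hall : ∀ d ∈ c₁ :: c₂ :: c₃ :: cs, d.label = lbl)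
    (hc : (c₁ :: c₂ :: c₃ :: cs)[i]? = some c)
    (hlift : IsUnboundedLift A B (contribStep (c₁ :: c₂ :: c₃ :: cs) C i) (beta c (j :: r))
      c.label)
    (htr : IsTractable A B k (beta c (j :: r))) :
    IsUnboundedLift A B C (beta (.node lbl (c₁ :: c₂ :: c₃ :: cs)) (i :: j :: r)) lbl ∧
      IsTractable A B (k + 1) (beta (.node lbl (c₁ :: c₂ :: c₃ :: cs)) (i :: j :: r)) := by
  have hc_lbl : c.label = lbl := hall c (List.mem_of_getElem? hc)
  have hc₁_lbl : c₁.label = lbl := hall c₁ (by simp)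
  have hM : omul lbl.M lbl.M = lbl.M := congrArg Elem.M hidem
  rw [hc_lbl] at hlift
  by_cases hi : i = 0
  · subst hi
    obtain rfl : c₁ = c := by simpa using hc
    rw [contribStep_idem_zero, hc_lbl] at hlift
    rw [beta_idem_zero, hc_lbl]
    refine ⟨by simpa only [hidem] using hlift.eprod_right hmem hpq.symm,
      (htr.eprod_right hmem ?_).mono (by omega)⟩
    rw [hlift.q_eq, hpq]
  by_cases hlast : i = cs.length + 2
  · subst hlast
    rw [contribStep_idem_last, hc₁_lbl] at hlift
    rw [beta_idem_last hc, hc_lbl]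
    refine ⟨by simpa only [hidem] using hlift.eprod_left hmem hpq.symm,
      (htr.eprod_left hmem ?_).mono (by omega)⟩
    rw [hlift.p_eq, hpq]
  · rw [contribStep_idem_mid hi hlast, hc₁_lbl] at hlift
    rw [beta_idem_mid hc hi hlast]
    have hbar : obar lbl.M = lbl.M := hmem.x_ne_bot_and_obar_eq.2
    refine ⟨hlift.eflat hpq hM hbar, htr.eflat ⟨?_, ?_⟩⟩
    · rw [hlift.p_eq, hlift.q_eq, hpq]
    · rw [hlift.obar_eq, hbar, hM]

theorem beta_spec_node (ht : (FT.node lbl cs).WF)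
    (hleaves : ∀ e ∈ (FT.node lbl cs).leaves, InPathsO A B (some e)) (hc : cs[i]? = some c)
    (hlift : IsUnboundedLift A B (contribStep cs C i) (beta c (j :: r)) c.label)
    (htr : IsTractable A B k (beta c (j :: r))) :
    IsUnboundedLift A B C (beta (.node lbl cs) (i :: j :: r)) lbl ∧
      IsTractable A B (k + 1) (beta (.node lbl cs) (i :: j :: r)) := by
  have hmem := fun d (hd : d ∈ cs) => ht.label_mem_paths_of_mem hleaves hd
  cases ht with
  | node _ _ hlen _ hchain hfold hidem =>
  match cs, hlen with
  | [c₁, c₂], _ =>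
    exact beta_spec_pair (hfold _ _ rfl)
      ((List.isChain_pair (R := fun a b : Elem QA n => a.q = b.p)).1 hchain)
      (hmem c₁ (by simp)) (hmem c₂ (by simp)) hc hlift htr
  | c₁ :: c₂ :: c₃ :: cs, _ =>
    obtain ⟨hpq, hid, hall⟩ := hidem (by simp)
    exact beta_spec_idem hpq hid (hall c₁ (by simp) ▸ hmem c₁ (by simp)) hall hc hlift htr

theorem beta_spec {lbl₀ : Elem QA n} {cs₀ : List (FT QA n)} {i₀ : ℕ} :
    ∀ (σ : List ℕ) (t : FT QA n) (C : Set (Fin n × Fin n)), t.WF →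
      (∀ e ∈ t.leaves, InPathsO A B (some e)) → t.subtreeAt σ = some (.node lbl₀ cs₀) →
      IsFaultyChild cs₀ i₀ (contribAt t C (σ ++ [i₀])) →
      IsUnboundedLift A B C (beta t (σ ++ [i₀])) t.label ∧
        IsTractable A B (σ.length + 1) (beta t (σ ++ [i₀]))
  | [], t, C, ht, hleaves, hsub, hfault => by
    obtain rfl : t = .node lbl₀ cs₀ := Option.some_inj.1 hsub
    obtain ⟨-, -, -, c, hc, -⟩ := id hfault
    rw [List.nil_append, contribAt_node hc, contribAt_nil] at hfault
    exact beta_spec_fault ht hleaves hfault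
  | s :: σ, .leaf _, C, ht, hleaves, hsub, hfault => by
    simp [FT.subtreeAt, FT.childAt] at hsub
  | s :: σ, .node lbl cs, C, ht, hleaves, hsub, hfault => by
    obtain ⟨c, hc, hsub'⟩ :
        ∃ c, cs[s]? = some c ∧ c.subtreeAt σ = some (.node lbl₀ cs₀) := by
      simpa [FT.subtreeAt, FT.childAt, Option.bind_eq_some_iff] using hsub
    have hcs := List.mem_of_getElem? hc
    rw [List.cons_append, contribAt_node hc] at hfault
    obtain ⟨hlift, htr⟩ := beta_spec σ c _ (ht.of_mem hcs)
      (fun e he => hleaves e (FT.mem_leaves_node hcs he)) hsub' hfault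
    obtain ⟨j, r, hjr⟩ := List.exists_cons_of_ne_nil
      (List.append_ne_nil_of_right_ne_nil σ (List.cons_ne_nil i₀ []))
    rw [List.cons_append, hjr]
    rw [hjr] at hlift htr
    exact beta_spec_node ht hleaves hc hlift htr

end Beta

/-- if some word with `f_A(w) ≠ -∞` admits a factorisation tree of height at
most `3|S̄_{A,B}|` containing a fault, then `I_{A,B}` contains a tractable witness of
non-domination. -/
theorem fault_implies_tractable_witness {Sigma QA : Type} [Fintype Sigma] [Fintype QA]
    [DecidableEq QA] {nB : ℕ} (A : MPA Sigma QA) (B : MPA Sigma (Fin nB))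
    (hdet : A.Deterministic) (hB : ∀ v : List Sigma, B.func v ≠ ⊥)
    (h : ∃ (w : List Sigma) (t : FT QA nB),
        A.func w ≠ ⊥ ∧ IsFactTreeOn A B w t ∧ FT.height t ≤ 3 * sizeS A B ∧
        ∃ π : List ℕ, IsFaultAt B t π) :
    ∃ e : Elem QA nB, InAsympO A B (some e) ∧ IsTractableWitness A B e := by
  obtain ⟨w, t, -, ⟨ht, p, q, xs, hIp, hFq, hpath⟩, hheight, -, σ, i, rfl, lbl, cs, hsub,
    hfault⟩ := h
  obtain ⟨hrun, hgen⟩ := hpath.isRun_and_isGen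
  obtain ⟨rfl, rfl⟩ := ht.label_p_q hrun
  obtain ⟨hlift, htr⟩ := beta_spec σ t _ ht (fun e he => .gen e (hgen e he)) hsub hfault
  have hσ := FT.length_add_height_le_of_subtreeAt σ t _ hsub
  simp only [FT.height] at hσ
  exact ⟨_, hlift.mem, hlift.isWitness hIp hFq, htr.mono (by omega)⟩
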